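/- arXiv:0812.1993 — 6 statements merged into one kernel-verified Lean document; each statement's English description precedes it below -/
import Mathlib

section
/- Let T be a finite-dimensional real inner product space, N a finite-dimensional real vector space with a nondegenerate symmetric bilinear form ⟨·,·⟩_N, and A : N → End(T) a linear map such that each A_ξ is self-adjoint on T. Let R⊥ : T × T → End(N) be the bilinear map determined by ⟨R⊥(X,Y)ξ,η⟩_N = ⟨[A_ξ,A_η]X,Y⟩_T (the Ricci equation), and for a fixed orthonormal basis (e_1,…,e_n) of T define 𝓡(ξ₁,ξ₂)ξ₃ := Σ_{i=1}^{n} R⊥(A_{ξ₁}e_i, A_{ξ₂}e_i)ξ₃. Then 𝓡 is an algebraic curvature tensor on (N,⟨·,·⟩_N): 𝓡(ξ₁,ξ₂) = -𝓡(ξ₂,ξ₁); ⟨𝓡(ξ₁,ξ₂)ξ₃,ξ₄⟩_N = -⟨ξ₃, 𝓡(ξ₁,ξ₂)ξ₄⟩_N; ⟨𝓡(ξ₁,ξ₂)ξ₃,ξ₄⟩_N = ⟨𝓡(ξ₃,ξ₄)ξ₁,ξ₂⟩_N; and 𝓡(ξ₁,ξ₂)ξ₃ + 𝓡(ξ₂,ξ₃)ξ₁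 + 𝓡(ξ₃,ξ₁)ξ₂ = 0 for all ξ₁,ξ₂,ξ₃,ξ₄ ∈ N. -/
open scoped RealInnerProductSpace

/-!
By the Ricci equation, `⟨𝓡(ξ₁, ξ₂)ξ₃, ξ₄⟩ = tr (A_{ξ₁} A_{ξ₂} [A_{ξ₃}, A_{ξ₄}])`. Since a commutator
of self-adjoint maps is skew-adjoint, `R⊥` and hence `𝓡` are antisymmetric, so this also equals
`½ tr ([A_{ξ₁}, A_{ξ₂}] [A_{ξ₃}, A_{ξ₄}])`. Pair symmetry is then `tr (PQ) = tr (QP)`, and because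
`tr (P [Q, R]) = tr ([P, Q] R)` the first Bianchi identity reduces to the Jacobi identity.
-/

namespace LinearMap

variable {T : Type*} [NormedAddCommGroup T] [InnerProductSpace ℝ T]

theorem IsSymmetric.inner_lie_apply {P Q : T →ₗ[ℝ] T} (hP : P.IsSymmetric) (hQ : Q.IsSymmetric)
    (x y : T) : ⟪⁅P, Q⁆ x, y⟫ = -⟪x, ⁅P, Q⁆ y⟫ := by
  simp only [Ring.lie_def, sub_apply, Module.End.mul_apply, inner_sub_left, inner_sub_right,
    hP _ _, hQ _ _]
  ring

theorem IsSymmetric.sum_inner_apply_eq_trace {ι : Type*} [Fintype ι] {B : T →ₗ[ℝ] T}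
    (hB : B.IsSymmetric) (P : T →ₗ[ℝ] T) (e : OrthonormalBasis ι ℝ T) :
    ∑ i, ⟪P (e i), B (e i)⟫ = trace ℝ T (B * P) := by
  rw [trace_eq_sum_inner _ e]
  refine Finset.sum_congr rfl fun i _ => ?_
  rw [← hB, real_inner_comm, Module.End.mul_apply]

end LinearMap

section ShapeCurvature

variable {T N ι : Type*} [NormedAddCommGroup T] [InnerProductSpace ℝ T]
  [AddCommGroup N] [Module ℝ N] [Fintype ι]
  {gN : LinearMap.BilinForm ℝ N} {A : N →ₗ[ℝ] T →ₗ[ℝ] T} {Rp : T →ₗ[ℝ] T →ₗ[ℝ] N →ₗ[ℝ] N}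

open LinearMap

noncomputable def shapeCurvature (A : N →ₗ[ℝ] T →ₗ[ℝ] T) (Rp : T →ₗ[ℝ] T →ₗ[ℝ] N →ₗ[ℝ] N)
    (e : OrthonormalBasis ι ℝ T) (ξ₁ ξ₂ : N) : N →ₗ[ℝ] N :=
  ∑ i, Rp (A ξ₁ (e i)) (A ξ₂ (e i))

variable (hA : ∀ ξ, (A ξ).IsSymmetric)
  (hRic : ∀ (X Y : T) (ξ η : N), gN (Rp X Y ξ) η = ⟪⁅A ξ, A η⁆ X, Y⟫)
include hA hRic

theorem normalCurvature_swap (hnondeg : gN.Nondegenerate) (X Y : T) : Rp Y X = -Rp X Y :=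
  gN.compLeft_injective hnondeg <| LinearMap.BilinForm.ext fun ξ η => by
    rw [BilinForm.compLeft_apply, BilinForm.compLeft_apply, LinearMap.neg_apply, map_neg,
      LinearMap.neg_apply, hRic, hRic, (hA ξ).inner_lie_apply (hA η), real_inner_comm]

theorem shapeCurvature_swap (hnondeg : gN.Nondegenerate) (e : OrthonormalBasis ι ℝ T) (ξ₁ ξ₂ : N) :
    shapeCurvature A Rp e ξ₂ ξ₁ = -shapeCurvature A Rp e ξ₁ ξ₂ := by
  rw [shapeCurvature, shapeCurvature, ← Finset.sum_neg_distrib]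
  exact Finset.sum_congr rfl fun i _ => normalCurvature_swap hA hRic hnondeg _ _

theorem shapeCurvature_apply_eq_trace (e : OrthonormalBasis ι ℝ T) (ξ₁ ξ₂ ξ₃ ξ₄ : N) :
    gN (shapeCurvature A Rp e ξ₁ ξ₂ ξ₃) ξ₄ = trace ℝ T (A ξ₁ * A ξ₂ * ⁅A ξ₃, A ξ₄⁆) := by
  calc gN (shapeCurvature A Rp e ξ₁ ξ₂ ξ₃) ξ₄
      = ∑ i, ⟪(⁅A ξ₃, A ξ₄⁆ * A ξ₁) (e i), A ξ₂ (e i)⟫ := by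
        simp only [shapeCurvature, LinearMap.sum_apply, map_sum, hRic, Module.End.mul_apply]
    _ = trace ℝ T (A ξ₂ * (⁅A ξ₃, A ξ₄⁆ * A ξ₁)) := (hA ξ₂).sum_inner_apply_eq_trace _ e
    _ = trace ℝ T (A ξ₁ * A ξ₂ * ⁅A ξ₃, A ξ₄⁆) := by rw [trace_mul_cycle', mul_assoc]

theorem two_mul_shapeCurvature_apply (hnondeg : gN.Nondegenerate) (e : OrthonormalBasis ι ℝ T)
    (ξ₁ ξ₂ ξ₃ ξ₄ : N) :
    2 * gN (shapeCurvature A Rp e ξ₁ ξ₂ ξ₃) ξ₄ = trace ℝ T (⁅A ξ₁, A ξ₂⁆ * ⁅A ξ₃, A ξ₄⁆) := by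
  have hswap : gN (shapeCurvature A Rp e ξ₂ ξ₁ ξ₃) ξ₄ = -gN (shapeCurvature A Rp e ξ₁ ξ₂ ξ₃) ξ₄ := by
    rw [shapeCurvature_swap hA hRic hnondeg, LinearMap.neg_apply, map_neg, LinearMap.neg_apply]
  rw [Ring.lie_def, sub_mul, map_sub, ← shapeCurvature_apply_eq_trace hA hRic e,
    ← shapeCurvature_apply_eq_trace hA hRic e, hswap]
  ring

theorem shapeCurvature_apply_eq_neg_apply_swap (hsymm : ∀ ξ η : N, gN ξ η = gN η ξ)
    (hnondeg : gN.Nondegenerate) (e : OrthonormalBasis ι ℝ T) (ξ₁ ξ₂ ξ₃ ξ₄ : N) :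
    gN (shapeCurvature A Rp e ξ₁ ξ₂ ξ₃) ξ₄ = -gN ξ₃ (shapeCurvature A Rp e ξ₁ ξ₂ ξ₄) := by
  have hskew : ⁅A ξ₄, A ξ₃⁆ = -⁅A ξ₃, A ξ₄⁆ := by rw [Ring.lie_def, Ring.lie_def, neg_sub]
  refine mul_left_cancel₀ (two_ne_zero' ℝ) ?_
  rw [hsymm ξ₃, mul_neg, two_mul_shapeCurvature_apply hA hRic hnondeg,
    two_mul_shapeCurvature_apply hA hRic hnondeg, hskew, mul_neg, map_neg, neg_neg]

theorem shapeCurvature_apply_eq_apply_pair_swap (hnondeg : gN.Nondegenerate)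
    (e : OrthonormalBasis ι ℝ T) (ξ₁ ξ₂ ξ₃ ξ₄ : N) :
    gN (shapeCurvature A Rp e ξ₁ ξ₂ ξ₃) ξ₄ = gN (shapeCurvature A Rp e ξ₃ ξ₄ ξ₁) ξ₂ := by
  refine mul_left_cancel₀ (two_ne_zero' ℝ) ?_
  rw [two_mul_shapeCurvature_apply hA hRic hnondeg, two_mul_shapeCurvature_apply hA hRic hnondeg,
    trace_mul_comm]

theorem shapeCurvature_add_cyclic (hnondeg : gN.Nondegenerate) (e : OrthonormalBasis ι ℝ T)
    (ξ₁ ξ₂ ξ₃ : N) :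
    shapeCurvature A Rp e ξ₁ ξ₂ ξ₃ + shapeCurvature A Rp e ξ₂ ξ₃ ξ₁ +
      shapeCurvature A Rp e ξ₃ ξ₁ ξ₂ = 0 := by
  have hJacobi : ⁅⁅A ξ₁, A ξ₂⁆, A ξ₃⁆ + ⁅⁅A ξ₂, A ξ₃⁆, A ξ₁⁆ + ⁅⁅A ξ₃, A ξ₁⁆, A ξ₂⁆ =
      (0 : Module.End ℝ T) := by
    simp only [Ring.lie_def]
    noncomm_ring
  refine LinearMap.ker_eq_bot.mp hnondeg.ker_eq_bot (LinearMap.ext fun η => ?_)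
  refine mul_left_cancel₀ (two_ne_zero' ℝ) ?_
  rw [map_zero, LinearMap.zero_apply, mul_zero, map_add, map_add, LinearMap.add_apply,
    LinearMap.add_apply, mul_add, mul_add, two_mul_shapeCurvature_apply hA hRic hnondeg,
    two_mul_shapeCurvature_apply hA hRic hnondeg, two_mul_shapeCurvature_apply hA hRic hnondeg,
    ← trace_lie_mul_eq, ← trace_lie_mul_eq, ← trace_lie_mul_eq, ← map_add, ← map_add, ← add_mul,
    ← add_mul, hJacobi, zero_mul, map_zero]

end ShapeCurvature

theorem normal_curvature_is_algebraic_curvature_tensor_general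
    {T N : Type*} [NormedAddCommGroup T] [InnerProductSpace ℝ T]
    [AddCommGroup N] [Module ℝ N]
    (gN : LinearMap.BilinForm ℝ N)
    (hsymm : ∀ ξ η : N, gN ξ η = gN η ξ)
    (hnondeg : gN.Nondegenerate)
    (A : N →ₗ[ℝ] (T →ₗ[ℝ] T))
    (hA : ∀ (ξ : N) (u w : T), ⟪A ξ u, w⟫ = ⟪u, A ξ w⟫)
    (Rp : T →ₗ[ℝ] T →ₗ[ℝ] (N →ₗ[ℝ] N))
    (hRic : ∀ (X Y : T) (ξ η : N),
      gN (Rp X Y ξ) η = ⟪(A ξ * A η - A η * A ξ) X, Y⟫)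
    {n : ℕ} (e : OrthonormalBasis (Fin n) ℝ T)
    (calR : N → N → (N →ₗ[ℝ] N))
    (hcalR : ∀ ξ₁ ξ₂ : N, calR ξ₁ ξ₂ = ∑ i, Rp (A ξ₁ (e i)) (A ξ₂ (e i))) :
    ∀ ξ₁ ξ₂ ξ₃ ξ₄ : N,
      calR ξ₁ ξ₂ = - calR ξ₂ ξ₁ ∧
      gN (calR ξ₁ ξ₂ ξ₃) ξ₄ = - gN ξ₃ (calR ξ₁ ξ₂ ξ₄) ∧
      gN (calR ξ₁ ξ₂ ξ₃) ξ₄ = gN (calR ξ₃ ξ₄ ξ₁) ξ₂ ∧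
      calR ξ₁ ξ₂ ξ₃ + calR ξ₂ ξ₃ ξ₁ + calR ξ₃ ξ₁ ξ₂ = 0 := by
  obtain rfl : calR = shapeCurvature A Rp e := funext₂ hcalR
  have hRic' : ∀ (X Y : T) (ξ η : N), gN (Rp X Y ξ) η = ⟪⁅A ξ, A η⁆ X, Y⟫ := by
    simpa only [← Ring.lie_def] using hRic
  intro ξ₁ ξ₂ ξ₃ ξ₄
  exact ⟨shapeCurvature_swap hA hRic' hnondeg e ξ₂ ξ₁,
    shapeCurvature_apply_eq_neg_apply_swap hA hRic' hsymm hnondeg e ξ₁ ξ₂ ξ₃ ξ₄,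
    shapeCurvature_apply_eq_apply_pair_swap hA hRic' hnondeg e ξ₁ ξ₂ ξ₃ ξ₄,
    shapeCurvature_add_cyclic hA hRic' hnondeg e ξ₁ ξ₂ ξ₃⟩

theorem normal_curvature_is_algebraic_curvature_tensor
    {T N : Type*} [NormedAddCommGroup T] [InnerProductSpace ℝ T] [FiniteDimensional ℝ T]
    [AddCommGroup N] [Module ℝ N] [FiniteDimensional ℝ N]
    (gN : LinearMap.BilinForm ℝ N)
    (hsymm : ∀ ξ η : N, gN ξ η = gN η ξ)
    (hnondeg : gN.Nondegenerate)
    (A : N →ₗ[ℝ] (T →ₗ[ℝ] T))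
    (hA : ∀ (ξ : N) (u w : T), ⟪A ξ u, w⟫ = ⟪u, A ξ w⟫)
    (Rp : T →ₗ[ℝ] T →ₗ[ℝ] (N →ₗ[ℝ] N))
    (hRic : ∀ (X Y : T) (ξ η : N),
      gN (Rp X Y ξ) η = ⟪(A ξ * A η - A η * A ξ) X, Y⟫)
    {n : ℕ} (e : OrthonormalBasis (Fin n) ℝ T)
    (calR : N → N → (N →ₗ[ℝ] N))
    (hcalR : ∀ ξ₁ ξ₂ : N, calR ξ₁ ξ₂ = ∑ i, Rp (A ξ₁ (e i)) (A ξ₂ (e i))) :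
    ∀ ξ₁ ξ₂ ξ₃ ξ₄ : N,
      calR ξ₁ ξ₂ = - calR ξ₂ ξ₁ ∧
      gN (calR ξ₁ ξ₂ ξ₃) ξ₄ = - gN ξ₃ (calR ξ₁ ξ₂ ξ₄) ∧
      gN (calR ξ₁ ξ₂ ξ₃) ξ₄ = gN (calR ξ₃ ξ₄ ξ₁) ξ₂ ∧
      calR ξ₁ ξ₂ ξ₃ + calR ξ₂ ξ₃ ξ₁ + calR ξ₃ ξ₁ ξ₂ = 0 :=
  normal_curvature_is_algebraic_curvature_tensor_general gN hsymm hnondeg A hA Rp hRic e calR hcalR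
end

section
/- Let T be a finite-dimensional real inner product space, N a finite-dimensional real vector space with a nondegenerate symmetric bilinear form ⟨·,·⟩_N, and A : N → End(T) a linear map such that each A_ξ is self-adjoint on T. Let R⊥ : T × T → End(N) be the bilinear map determined by ⟨R⊥(X,Y)ξ,η⟩_N = ⟨[A_ξ,A_η]X,Y⟩_T, and for an orthonormal basis (e_1,…,e_n) of T define 𝓡(ξ₁,ξ₂)ξ₃ := Σ_{i=1}^{n} R⊥(A_{ξ₁}e_i, A_{ξ₂}e_i)ξ₃. Then ⟨𝓡(ξ₁,ξ₂)ξ₃,ξ₄⟩_N = (1/2)·Tr([A_{ξ₁},A_{ξ₂}] ∘ [A_{ξ₃},A_{ξ₄}]) for all ξ₁,ξ₂,ξ₃,ξ₄ ∈ N; in particular 𝓡 does not depend on the choice of orthonormal basis of T. -/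
open scoped RealInnerProductSpace

/-!
Pairing with `ξ₄` through the Ricci equation turns `⟨𝓡(ξ₁,ξ₂)ξ₃, ξ₄⟩` into
`∑ i, ⟪C (A ξ₁ eᵢ), A ξ₂ eᵢ⟫ = Tr (A ξ₁ A ξ₂ C)` with `C = [A ξ₃, A ξ₄]`. As `C` is skew-adjoint
and the `A ξ` are self-adjoint, taking adjoints gives `Tr (A ξ₂ A ξ₁ C) = -Tr (A ξ₁ A ξ₂ C)`,
so this trace is half of `Tr ([A ξ₁, A ξ₂] C)`. That expression does not involve the basis, and
nondegeneracy of `gN` turns equality of the pairings into equality of the operators.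
-/

theorem IsSelfAdjoint.star_commutator {R : Type*} [Ring R] [StarRing R] {a b : R}
    (ha : IsSelfAdjoint a) (hb : IsSelfAdjoint b) : star (a * b - b * a) = -(a * b - b * a) := by
  rw [star_sub, star_mul, star_mul, ha.star_eq, hb.star_eq, neg_sub]

namespace LinearMap

theorem trace_adjoint {𝕜 E : Type*} [RCLike 𝕜] [NormedAddCommGroup E] [InnerProductSpace 𝕜 E]
    [FiniteDimensional 𝕜 E] (f : E →ₗ[𝕜] E) :
    trace 𝕜 E (adjoint f) = star (trace 𝕜 E f) := by
  classical
  let b := stdOrthonormalBasis 𝕜 E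
  rw [trace_eq_matrix_trace 𝕜 b.toBasis, trace_eq_matrix_trace 𝕜 b.toBasis, toMatrix_adjoint,
    Matrix.trace_conjTranspose]

variable {T : Type*} [NormedAddCommGroup T] [InnerProductSpace ℝ T] [FiniteDimensional ℝ T]

theorem trace_star (f : T →ₗ[ℝ] T) : trace ℝ T (star f) = trace ℝ T f := by
  rw [star_eq_adjoint, trace_adjoint, star_trivial]

theorem trace_mul_mul_eq_half_trace_commutator_mul {B₁ B₂ C : T →ₗ[ℝ] T}
    (h₁ : IsSelfAdjoint B₁) (h₂ : IsSelfAdjoint B₂) (hC : star C = -C) :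
    trace ℝ T (B₁ * B₂ * C) = 1 / 2 * trace ℝ T ((B₁ * B₂ - B₂ * B₁) * C) := by
  have hswap : trace ℝ T (B₂ * B₁ * C) = -trace ℝ T (B₁ * B₂ * C) := calc
    trace ℝ T (B₂ * B₁ * C) = trace ℝ T (star (B₂ * B₁ * C)) := (trace_star _).symm
    _ = -trace ℝ T (C * (B₁ * B₂)) := by
      rw [star_mul, star_mul, h₁.star_eq, h₂.star_eq, hC, neg_mul, map_neg]
    _ = -trace ℝ T (B₁ * B₂ * C) := by rw [trace_mul_comm]
  rw [sub_mul, map_sub, hswap]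
  ring

end LinearMap

section NormalCurvature

variable {T N : Type*} [NormedAddCommGroup T] [InnerProductSpace ℝ T]
  [AddCommGroup N] [Module ℝ N] {gN : LinearMap.BilinForm ℝ N} {A : N →ₗ[ℝ] (T →ₗ[ℝ] T)}
  {Rp : T →ₗ[ℝ] T →ₗ[ℝ] (N →ₗ[ℝ] N)}

theorem sum_normalCurvature_eq_trace (hA : ∀ ξ, (A ξ).IsSymmetric)
    (hRic : ∀ (X Y : T) (ξ η : N), gN (Rp X Y ξ) η = ⟪(A ξ * A η - A η * A ξ) X, Y⟫)
    {ι : Type*} [Fintype ι] (f : OrthonormalBasis ι ℝ T) (ξ₁ ξ₂ ξ₃ ξ₄ : N) :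
    gN ((∑ i, Rp (A ξ₁ (f i)) (A ξ₂ (f i))) ξ₃) ξ₄ =
      LinearMap.trace ℝ T (A ξ₁ * A ξ₂ * (A ξ₃ * A ξ₄ - A ξ₄ * A ξ₃)) := by
  rw [mul_assoc, LinearMap.trace_mul_comm, LinearMap.trace_eq_sum_inner _ f,
    LinearMap.sum_apply, map_sum, LinearMap.sum_apply]
  refine Finset.sum_congr rfl fun i _ => ?_
  rw [hRic, ← hA, real_inner_comm]
  rfl

theorem sum_normalCurvature_eq_half_trace [FiniteDimensional ℝ T] (hA : ∀ ξ, (A ξ).IsSymmetric)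
    (hRic : ∀ (X Y : T) (ξ η : N), gN (Rp X Y ξ) η = ⟪(A ξ * A η - A η * A ξ) X, Y⟫)
    {ι : Type*} [Fintype ι] (f : OrthonormalBasis ι ℝ T) (ξ₁ ξ₂ ξ₃ ξ₄ : N) :
    gN ((∑ i, Rp (A ξ₁ (f i)) (A ξ₂ (f i))) ξ₃) ξ₄ =
      1 / 2 * LinearMap.trace ℝ T
        ((A ξ₁ * A ξ₂ - A ξ₂ * A ξ₁) * (A ξ₃ * A ξ₄ - A ξ₄ * A ξ₃)) := by
  have hsa : ∀ ξ, IsSelfAdjoint (A ξ) := fun ξ => (A ξ).isSymmetric_iff_isSelfAdjoint.mp (hA ξ)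
  rw [sum_normalCurvature_eq_trace hA hRic,
    LinearMap.trace_mul_mul_eq_half_trace_commutator_mul (hsa ξ₁) (hsa ξ₂)
      ((hsa ξ₃).star_commutator (hsa ξ₄))]

end NormalCurvature

theorem normal_curvature_trace_formula_general
    {T N : Type*} [NormedAddCommGroup T] [InnerProductSpace ℝ T] [FiniteDimensional ℝ T]
    [AddCommGroup N] [Module ℝ N]
    (gN : LinearMap.BilinForm ℝ N)
    (hnondeg : gN.Nondegenerate)
    (A : N →ₗ[ℝ] (T →ₗ[ℝ] T))
    (hA : ∀ (ξ : N) (u w : T), ⟪A ξ u, w⟫ = ⟪u, A ξ w⟫)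
    (Rp : T →ₗ[ℝ] T →ₗ[ℝ] (N →ₗ[ℝ] N))
    (hRic : ∀ (X Y : T) (ξ η : N),
      gN (Rp X Y ξ) η = ⟪(A ξ * A η - A η * A ξ) X, Y⟫)
    {n : ℕ} (e : OrthonormalBasis (Fin n) ℝ T)
    (calR : N → N → (N →ₗ[ℝ] N))
    (hcalR : ∀ ξ₁ ξ₂ : N, calR ξ₁ ξ₂ = ∑ i, Rp (A ξ₁ (e i)) (A ξ₂ (e i))) :
    (∀ ξ₁ ξ₂ ξ₃ ξ₄ : N,
      gN (calR ξ₁ ξ₂ ξ₃) ξ₄ =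
        (1/2) * LinearMap.trace ℝ T
          ((A ξ₁ * A ξ₂ - A ξ₂ * A ξ₁) * (A ξ₃ * A ξ₄ - A ξ₄ * A ξ₃))) ∧
    (∀ (f : OrthonormalBasis (Fin n) ℝ T) (ξ₁ ξ₂ : N),
      (∑ i, Rp (A ξ₁ (f i)) (A ξ₂ (f i))) = calR ξ₁ ξ₂) := by
  have hgN : Function.Injective gN :=
    LinearMap.ker_eq_bot.mp (LinearMap.separatingLeft_iff_ker_eq_bot.mp hnondeg.1)
  refine ⟨fun ξ₁ ξ₂ ξ₃ ξ₄ => ?_, fun f ξ₁ ξ₂ => ?_⟩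
  · rw [hcalR, sum_normalCurvature_eq_half_trace hA hRic]
  · ext ξ₃
    refine hgN (LinearMap.ext fun ξ₄ => ?_)
    rw [hcalR, sum_normalCurvature_eq_half_trace hA hRic,
      sum_normalCurvature_eq_half_trace hA hRic]

theorem normal_curvature_trace_formula
    {T N : Type*} [NormedAddCommGroup T] [InnerProductSpace ℝ T] [FiniteDimensional ℝ T]
    [AddCommGroup N] [Module ℝ N] [FiniteDimensional ℝ N]
    (gN : LinearMap.BilinForm ℝ N)
    (hsymm : ∀ ξ η : N, gN ξ η = gN η ξ)
    (hnondeg : gN.Nondegenerate)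
    (A : N →ₗ[ℝ] (T →ₗ[ℝ] T))
    (hA : ∀ (ξ : N) (u w : T), ⟪A ξ u, w⟫ = ⟪u, A ξ w⟫)
    (Rp : T →ₗ[ℝ] T →ₗ[ℝ] (N →ₗ[ℝ] N))
    (hRic : ∀ (X Y : T) (ξ η : N),
      gN (Rp X Y ξ) η = ⟪(A ξ * A η - A η * A ξ) X, Y⟫)
    {n : ℕ} (e : OrthonormalBasis (Fin n) ℝ T)
    (calR : N → N → (N →ₗ[ℝ] N))
    (hcalR : ∀ ξ₁ ξ₂ : N, calR ξ₁ ξ₂ = ∑ i, Rp (A ξ₁ (e i)) (A ξ₂ (e i))) :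
    (∀ ξ₁ ξ₂ ξ₃ ξ₄ : N,
      gN (calR ξ₁ ξ₂ ξ₃) ξ₄ =
        (1/2) * LinearMap.trace ℝ T
          ((A ξ₁ * A ξ₂ - A ξ₂ * A ξ₁) * (A ξ₃ * A ξ₄ - A ξ₄ * A ξ₃))) ∧
    (∀ (f : OrthonormalBasis (Fin n) ℝ T) (ξ₁ ξ₂ : N),
      (∑ i, Rp (A ξ₁ (f i)) (A ξ₂ (f i))) = calR ξ₁ ξ₂) :=
  normal_curvature_trace_formula_general gN hnondeg A hA Rp hRic e calR hcalR
end

section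
/- Let T be a finite-dimensional real inner product space, N a finite-dimensional real vector space with a nondegenerate symmetric bilinear form ⟨·,·⟩_N, and A : N → End(T) a linear map such that each A_ξ is self-adjoint on T. Let R⊥ : T × T → End(N) be the bilinear map determined by ⟨R⊥(X,Y)ξ,η⟩_N = ⟨[A_ξ,A_η]X,Y⟩_T, and for an orthonormal basis (e_1,…,e_n) of T define 𝓡(ξ₁,ξ₂)ξ₃ := Σ_{i=1}^{n} R⊥(A_{ξ₁}e_i, A_{ξ₂}e_i)ξ₃. Then the linear span in End(N) of the endomorphisms 𝓡(ξ₁,ξ₂), for ξ₁,ξ₂ ∈ N, equals the linear span of the endomorphisms R⊥(X,Y), for X,Y ∈ T. -/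
/-!
Let φ be a functional on `End N` vanishing on every `calR ξ₁ ξ₂`. Nondegeneracy of `gN` writes
`φ` as `F ↦ ∑ i, gN (F (x i)) (y i)`, so by the Ricci equation `φ (Rp X Y) = ⟪L X, Y⟫` with
`L = ∑ i, ⁅A (x i), A (y i)⁆`, a skew-adjoint operator. On the other hand
`φ (calR ξ η) = tr (L * A ξ * A η)`, so `L` is trace-orthogonal to every commutator in its own
expansion: `tr (L * L) = -∑ ‖L (e i)‖² = 0`, hence `L = 0` and `φ` vanishes on every `Rp X Y`.
-/

open scoped InnerProductSpace RealInnerProductSpace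

theorem Module.Basis.sum_coord_smulRight {R M M' ι : Type*} [CommSemiring R] [AddCommMonoid M]
    [Module R M] [AddCommMonoid M'] [Module R M'] [Fintype ι] (v : Module.Basis ι R M)
    (F : M →ₗ[R] M') :
    ∑ i, (v.coord i).smulRight (F (v i)) = F := by
  refine v.ext fun j => ?_
  simp only [LinearMap.sum_apply, LinearMap.smulRight_apply, Module.Basis.coord_apply,
    Module.Basis.repr_self]
  rw [Finset.sum_eq_single j] <;> simp +contextual

namespace LinearMap

section InnerProductSpace

variable {𝕜 E : Type*} [RCLike 𝕜] [NormedAddCommGroup E] [InnerProductSpace 𝕜 E]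

theorem IsSymmetric.inner_lie_apply_s4 {S U : E →ₗ[𝕜] E} (hS : S.IsSymmetric)
    (hU : U.IsSymmetric) (x y : E) : ⟪⁅S, U⁆ x, y⟫_𝕜 = -⟪x, ⁅S, U⁆ y⟫_𝕜 := by
  simp only [Ring.lie_def, sub_apply, Module.End.mul_apply, inner_sub_left, inner_sub_right,
    hS _, hU _]
  abel

theorem sum_inner_apply_eq_trace {ι : Type*} [Fintype ι] (e : OrthonormalBasis ι 𝕜 E)
    {U : E →ₗ[𝕜] E} (hU : U.IsSymmetric) (L S : E →ₗ[𝕜] E) :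
    ∑ i, ⟪U (e i), L (S (e i))⟫_𝕜 = trace 𝕜 E (L * S * U) := by
  rw [trace_mul_comm, trace_eq_sum_inner _ e]
  simp only [Module.End.mul_apply, hU _]

theorem eq_zero_of_trace_mul_self_eq_zero [FiniteDimensional 𝕜 E] {L : E →ₗ[𝕜] E}
    (hL : ∀ x y, ⟪L x, y⟫_𝕜 = -⟪x, L y⟫_𝕜) (h : trace 𝕜 E (L * L) = 0) : L = 0 := by
  let e := stdOrthonormalBasis 𝕜 E
  have hsum : ∑ i, ‖L (e i)‖ ^ 2 = 0 := by
    have : ∑ i, ⟪L (e i), L (e i)⟫_𝕜 = -trace 𝕜 E (L * L) := by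
      simp only [trace_eq_sum_inner _ e, Module.End.mul_apply, hL _ (L _), Finset.sum_neg_distrib]
    simp only [inner_self_eq_norm_sq_to_K, h, neg_zero] at this
    exact_mod_cast this
  have hLe : ∀ i, L (e i) = 0 := fun i => by
    simpa using (Finset.sum_eq_zero_iff_of_nonneg fun j _ => sq_nonneg ‖L (e j)‖).1 hsum i
  exact e.toBasis.ext fun i => by simpa using hLe i

theorem sum_lie_eq_zero_of_trace_eq_zero [FiniteDimensional 𝕜 E] {M ι : Type*} [Fintype ι]
    {A : M → E →ₗ[𝕜] E} (hA : ∀ m, (A m).IsSymmetric) (x y : ι → M)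
    (h : ∀ m m', trace 𝕜 E ((∑ i, ⁅A (x i), A (y i)⁆) * A m * A m') = 0) :
    ∑ i, ⁅A (x i), A (y i)⁆ = 0 := by
  set L := ∑ i, ⁅A (x i), A (y i)⁆ with hL
  refine eq_zero_of_trace_mul_self_eq_zero (fun u w => ?_) ?_
  · simp only [hL, sum_apply, sum_inner, inner_sum, (hA _).inner_lie_apply_s4 (hA _),
      Finset.sum_neg_distrib]
  · nth_rw 2 [hL]
    simp only [Finset.mul_sum, map_sum, Ring.lie_def, mul_sub, ← mul_assoc, map_sub, h,
      sub_self, Finset.sum_const_zero]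

end InnerProductSpace

theorem BilinForm.Nondegenerate.exists_dual_eq_sum {K V : Type*} [Field K] [AddCommGroup V]
    [Module K V] [FiniteDimensional K V] {B : LinearMap.BilinForm K V} (hB : B.Nondegenerate)
    (φ : Module.Dual K (V →ₗ[K] V)) :
    ∃ x y : Fin (Module.finrank K V) → V, ∀ F, φ F = ∑ i, B (F (x i)) (y i) := by
  let v := Module.finBasis K V
  let toDual := B.flip.toDual hB.flip
  refine ⟨v, fun i => toDual.symm (φ ∘ₗ smulRightₗ (v.coord i)), fun F => ?_⟩
  conv_lhs => rw [← v.sum_coord_smulRight F, map_sum]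
  exact Finset.sum_congr rfl fun i _ =>
    (B.flip.apply_toDual_symm_apply (hB := hB.flip) (φ ∘ₗ smulRightₗ (v.coord i)) (F (v i))).symm

end LinearMap

theorem span_normal_curvature_eq_span_Rperp_general
    {T N : Type*} [NormedAddCommGroup T] [InnerProductSpace ℝ T] [FiniteDimensional ℝ T]
    [AddCommGroup N] [Module ℝ N] [FiniteDimensional ℝ N]
    (gN : LinearMap.BilinForm ℝ N)
    (hnondeg : gN.Nondegenerate)
    (A : N →ₗ[ℝ] (T →ₗ[ℝ] T))
    (hA : ∀ (ξ : N) (u w : T), ⟪A ξ u, w⟫ = ⟪u, A ξ w⟫)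
    (Rp : T →ₗ[ℝ] T →ₗ[ℝ] (N →ₗ[ℝ] N))
    (hRic : ∀ (X Y : T) (ξ η : N),
      gN (Rp X Y ξ) η = ⟪(A ξ * A η - A η * A ξ) X, Y⟫)
    {n : ℕ} (e : OrthonormalBasis (Fin n) ℝ T)
    (calR : N → N → (N →ₗ[ℝ] N))
    (hcalR : ∀ ξ₁ ξ₂ : N, calR ξ₁ ξ₂ = ∑ i, Rp (A ξ₁ (e i)) (A ξ₂ (e i))) :
    Submodule.span ℝ {F : N →ₗ[ℝ] N | ∃ ξ₁ ξ₂ : N, F = calR ξ₁ ξ₂} =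
      Submodule.span ℝ {F : N →ₗ[ℝ] N | ∃ X Y : T, F = Rp X Y} := by
  refine le_antisymm (Submodule.span_le.2 ?_) ?_
  · rintro _ ⟨ξ₁, ξ₂, rfl⟩
    rw [hcalR]
    exact Submodule.sum_mem _ fun i _ => Submodule.subset_span ⟨_, _, rfl⟩
  rw [← Subspace.dualAnnihilator_le_dualAnnihilator_iff]
  intro φ hφ
  rw [Submodule.mem_dualAnnihilator] at hφ ⊢
  obtain ⟨x, y, hφ_eq⟩ := hnondeg.exists_dual_eq_sum φ
  have hφ_Rp : ∀ X Y, φ (Rp X Y) = ⟪(∑ i, ⁅A (x i), A (y i)⁆) X, Y⟫ := fun X Y => by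
    simp only [hφ_eq, hRic, Ring.lie_def, LinearMap.sum_apply, sum_inner]
  have hL : ∑ i, ⁅A (x i), A (y i)⁆ = 0 := by
    refine LinearMap.sum_lie_eq_zero_of_trace_eq_zero hA x y fun ξ η => ?_
    rw [← LinearMap.sum_inner_apply_eq_trace e (hA η),
      ← hφ (calR ξ η) (Submodule.subset_span ⟨ξ, η, rfl⟩), hcalR, map_sum]
    simp only [hφ_Rp, real_inner_comm]
  have hφ_ker : {F : N →ₗ[ℝ] N | ∃ X Y : T, F = Rp X Y} ⊆ LinearMap.ker φ := by
    rintro _ ⟨X, Y, rfl⟩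
    simp [hφ_Rp, hL]
  exact fun F hF => Submodule.span_le.2 hφ_ker hF

theorem span_normal_curvature_eq_span_Rperp
    {T N : Type*} [NormedAddCommGroup T] [InnerProductSpace ℝ T] [FiniteDimensional ℝ T]
    [AddCommGroup N] [Module ℝ N] [FiniteDimensional ℝ N]
    (gN : LinearMap.BilinForm ℝ N)
    (hsymm : ∀ ξ η : N, gN ξ η = gN η ξ)
    (hnondeg : gN.Nondegenerate)
    (A : N →ₗ[ℝ] (T →ₗ[ℝ] T))
    (hA : ∀ (ξ : N) (u w : T), ⟪A ξ u, w⟫ = ⟪u, A ξ w⟫)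
    (Rp : T →ₗ[ℝ] T →ₗ[ℝ] (N →ₗ[ℝ] N))
    (hRic : ∀ (X Y : T) (ξ η : N),
      gN (Rp X Y ξ) η = ⟪(A ξ * A η - A η * A ξ) X, Y⟫)
    {n : ℕ} (e : OrthonormalBasis (Fin n) ℝ T)
    (calR : N → N → (N →ₗ[ℝ] N))
    (hcalR : ∀ ξ₁ ξ₂ : N, calR ξ₁ ξ₂ = ∑ i, Rp (A ξ₁ (e i)) (A ξ₂ (e i))) :
    Submodule.span ℝ {F : N →ₗ[ℝ] N | ∃ ξ₁ ξ₂ : N, F = calR ξ₁ ξ₂} =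
      Submodule.span ℝ {F : N →ₗ[ℝ] N | ∃ X Y : T, F = Rp X Y} :=
  span_normal_curvature_eq_span_Rperp_general gN hnondeg A hA Rp hRic e calR hcalR
end

section
/- Let E be a finite-dimensional real inner product space, V ⊆ E a subspace, and R : E × E → End(E) a bilinear map such that R(x,y) = -R(y,x), each R(x,y) is skew-adjoint, R satisfies the first Bianchi identity R(x,y)z + R(y,z)x + R(z,x)y = 0, and each R(x,y) maps V into V. Then: (i) R(x,y) = 0 whenever x ∈ V and y ∈ V^⊥; (ii) for x,x' ∈ V the endomorphism R(x,x') vanishes on V^⊥; (iii) for y,y' ∈ V^⊥ the endomorphism R(y,y') vanishes on V. -/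
open scoped RealInnerProductSpace

/-! The first Bianchi identity together with the skew-symmetries of `R` gives the pair symmetry
`⟪R a b c, d⟫ = ⟪R c d a, b⟫`. For `x ∈ V`, `y ∈ Vᗮ` it turns `‖R x y z‖²` into
`⟪R z (R x y z) x, y⟫`, which vanishes because `R z (R x y z)` preserves `V`. Parts (ii) and (iii)
then follow from the Bianchi identity, in which two of the three terms are now known to vanish. -/

namespace CurvatureTensor

variable {E : Type*} [NormedAddCommGroup E] [InnerProductSpace ℝ E]
  {R : E →ₗ[ℝ] E →ₗ[ℝ] (E →ₗ[ℝ] E)}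

lemma inner_bianchi (hbianchi : ∀ x y z : E, R x y z + R y z x + R z x y = 0) (a b c d : E) :
    ⟪R a b c, d⟫ + ⟪R b c a, d⟫ + ⟪R c a b, d⟫ = 0 := by
  rw [← inner_add_left, ← inner_add_left, hbianchi, inner_zero_left]

lemma inner_apply_swap_left (hanti : ∀ x y : E, R x y = - R y x) (a b c d : E) :
    ⟪R a b c, d⟫ = -⟪R b a c, d⟫ := by
  rw [hanti a b, LinearMap.neg_apply, inner_neg_left]

lemma inner_apply_swap_right (hskew : ∀ x y u w : E, ⟪R x y u, w⟫ = - ⟪u, R x y w⟫)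
    (a b c d : E) : ⟪R a b c, d⟫ = -⟪R a b d, c⟫ := by
  rw [hskew a b c d, real_inner_comm]

-- The classical argument: add the inner Bianchi identities for the four cyclic shifts of `(a, b, c, d)`.
lemma inner_apply_swap_pairs (hanti : ∀ x y : E, R x y = - R y x)
    (hskew : ∀ x y u w : E, ⟪R x y u, w⟫ = - ⟪u, R x y w⟫)
    (hbianchi : ∀ x y z : E, R x y z + R y z x + R z x y = 0) (a b c d : E) :
    ⟪R a b c, d⟫ = ⟪R c d a, b⟫ := by
  have swapL := inner_apply_swap_left hanti
  have swapR := inner_apply_swap_right hskew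
  linarith [inner_bianchi hbianchi a b c d, inner_bianchi hbianchi b c d a,
    inner_bianchi hbianchi c d a b, inner_bianchi hbianchi d a b c,
    swapR a b c d, swapR b c a d, swapR c d b a, swapR d a c b,
    swapL a c d b, swapR c a d b, swapL b d a c, swapR d b a c,
    swapL a b c d, swapL c d a b]

lemma eq_zero_of_mem_of_mem_orthogonal (hanti : ∀ x y : E, R x y = - R y x)
    (hskew : ∀ x y u w : E, ⟪R x y u, w⟫ = - ⟪u, R x y w⟫)
    (hbianchi : ∀ x y z : E, R x y z + R y z x + R z x y = 0)
    {V : Submodule ℝ E} (hinv : ∀ x y : E, ∀ v ∈ V, R x y v ∈ V)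
    {x y : E} (hx : x ∈ V) (hy : y ∈ Vᗮ) : R x y = 0 := by
  ext z
  rw [LinearMap.zero_apply, ← inner_self_eq_zero (𝕜 := ℝ),
    inner_apply_swap_pairs hanti hskew hbianchi]
  exact hy _ (hinv _ _ x hx)

lemma apply_eq_zero_of_bianchi (hbianchi : ∀ x y z : E, R x y z + R y z x + R z x y = 0)
    {x y z : E} (hyz : R y z = 0) (hzx : R z x = 0) : R x y z = 0 := by
  simpa [hyz, hzx] using hbianchi x y z

end CurvatureTensor

open CurvatureTensor in
theorem curvature_vanishes_across_invariant_splitting_general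
    {E : Type*} [NormedAddCommGroup E] [InnerProductSpace ℝ E]
    (V : Submodule ℝ E)
    (R : E →ₗ[ℝ] E →ₗ[ℝ] (E →ₗ[ℝ] E))
    (hanti : ∀ x y : E, R x y = - R y x)
    (hskew : ∀ x y u w : E, ⟪R x y u, w⟫ = - ⟪u, R x y w⟫)
    (hbianchi : ∀ x y z : E, R x y z + R y z x + R z x y = 0)
    (hinv : ∀ x y : E, ∀ v ∈ V, R x y v ∈ V) :
    (∀ x ∈ V, ∀ y ∈ Vᗮ, R x y = 0) ∧
    (∀ x ∈ V, ∀ x' ∈ V, ∀ y ∈ Vᗮ, R x x' y = 0) ∧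
    (∀ y ∈ Vᗮ, ∀ y' ∈ Vᗮ, ∀ x ∈ V, R y y' x = 0) := by
  have mixed : ∀ x ∈ V, ∀ y ∈ Vᗮ, R x y = 0 := fun x hx y hy =>
    eq_zero_of_mem_of_mem_orthogonal hanti hskew hbianchi hinv hx hy
  have mixed' : ∀ x ∈ V, ∀ y ∈ Vᗮ, R y x = 0 := fun x hx y hy => by
    rw [hanti, mixed x hx y hy, neg_zero]
  refine ⟨mixed, ?_, ?_⟩
  · intro x hx x' hx' y hy
    exact apply_eq_zero_of_bianchi hbianchi (mixed x' hx' y hy) (mixed' x hx y hy)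
  · intro y hy y' hy' x hx
    exact apply_eq_zero_of_bianchi hbianchi (mixed' x hx y' hy') (mixed x hx y hy)

theorem curvature_vanishes_across_invariant_splitting
    {E : Type*} [NormedAddCommGroup E] [InnerProductSpace ℝ E] [FiniteDimensional ℝ E]
    (V : Submodule ℝ E)
    (R : E →ₗ[ℝ] E →ₗ[ℝ] (E →ₗ[ℝ] E))
    (hanti : ∀ x y : E, R x y = - R y x)
    (hskew : ∀ x y u w : E, ⟪R x y u, w⟫ = - ⟪u, R x y w⟫)
    (hbianchi : ∀ x y z : E, R x y z + R y z x + R z x y = 0)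
    (hinv : ∀ x y : E, ∀ v ∈ V, R x y v ∈ V) :
    (∀ x ∈ V, ∀ y ∈ Vᗮ, R x y = 0) ∧
    (∀ x ∈ V, ∀ x' ∈ V, ∀ y ∈ Vᗮ, R x x' y = 0) ∧
    (∀ y ∈ Vᗮ, ∀ y' ∈ Vᗮ, ∀ x ∈ V, R y y' x = 0) :=
  curvature_vanishes_across_invariant_splitting_general V R hanti hskew hbianchi hinv
end

section
/- Let E be a finite-dimensional real inner product space with inner product h, V ⊆ E a subspace, and Q : E → End(E) a linear map such that each Q(x) is skew-adjoint, Q satisfies the cyclic identity h(Q(x)y,z) + h(Q(y)z,x) + h(Q(z)x,y) = 0 for all x,y,z ∈ E, and each Q(x) maps V into V. Then for every x ∈ V the endomorphism Q(x) vanishes on V^⊥, and for every y ∈ V^⊥ the endomorphism Q(y) vanishes on V. -/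
/-! For `x ∈ V` and `y ∈ Vᗮ`, the cyclic identity together with skew-adjointness gives
`Q x y - Q y x ⟂ z` for every `z`, since `Q z x ∈ V` is orthogonal to `y`; so `Q x y = Q y x`.
This vector lies in `V` because `Q y` preserves `V`, and in `Vᗮ` because the skew-adjoint `Q x`
preserves `V`, hence also `Vᗮ`. So it is zero. -/

open scoped RealInnerProductSpace

section

variable {E : Type*} [NormedAddCommGroup E] [InnerProductSpace ℝ E]

theorem Submodule.apply_mem_orthogonal_of_skew {V : Submodule ℝ E} {T : E →ₗ[ℝ] E}
    (hskew : ∀ u w : E, ⟪T u, w⟫ = -⟪u, T w⟫) (hV : ∀ v ∈ V, T v ∈ V) {y : E} (hy : y ∈ Vᗮ) :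
    T y ∈ Vᗮ := by
  intro v hv
  have h := hskew v y
  rw [Submodule.inner_right_of_mem_orthogonal (hV v hv) hy] at h
  linarith

theorem inner_apply_sub_apply_swap_of_cyclic {Q : E →ₗ[ℝ] (E →ₗ[ℝ] E)}
    (hskew : ∀ x u w : E, ⟪Q x u, w⟫ = -⟪u, Q x w⟫)
    (hcyc : ∀ x y z : E, ⟪Q x y, z⟫ + ⟪Q y z, x⟫ + ⟪Q z x, y⟫ = 0) (x y z : E) :
    ⟪Q x y - Q y x, z⟫ = -⟪Q z x, y⟫ := by
  have h := hcyc x y z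
  rw [hskew y z x, real_inner_comm (Q y x) z] at h
  rw [inner_sub_left]
  linarith

theorem apply_comm_of_mem_of_mem_orthogonal {V : Submodule ℝ E} {Q : E →ₗ[ℝ] (E →ₗ[ℝ] E)}
    (hskew : ∀ x u w : E, ⟪Q x u, w⟫ = -⟪u, Q x w⟫)
    (hcyc : ∀ x y z : E, ⟪Q x y, z⟫ + ⟪Q y z, x⟫ + ⟪Q z x, y⟫ = 0)
    (hinv : ∀ x : E, ∀ v ∈ V, Q x v ∈ V) {x y : E} (hx : x ∈ V) (hy : y ∈ Vᗮ) :
    Q x y = Q y x := by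
  rw [← sub_eq_zero]
  refine ext_inner_right ℝ fun z => ?_
  rw [inner_apply_sub_apply_swap_of_cyclic hskew hcyc,
    Submodule.inner_right_of_mem_orthogonal (hinv z x hx) hy, neg_zero, inner_zero_left]

end

theorem weak_curvature_vanishes_across_invariant_splitting_general
    {E : Type*} [NormedAddCommGroup E] [InnerProductSpace ℝ E]
    (V : Submodule ℝ E)
    (Q : E →ₗ[ℝ] (E →ₗ[ℝ] E))
    (hskew : ∀ x u w : E, ⟪Q x u, w⟫ = - ⟪u, Q x w⟫)
    (hcyc : ∀ x y z : E, ⟪Q x y, z⟫ + ⟪Q y z, x⟫ + ⟪Q z x, y⟫ = 0)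
    (hinv : ∀ x : E, ∀ v ∈ V, Q x v ∈ V) :
    (∀ x ∈ V, ∀ y ∈ Vᗮ, Q x y = 0) ∧
    (∀ y ∈ Vᗮ, ∀ x ∈ V, Q y x = 0) := by
  have hcomm {x y : E} (hx : x ∈ V) (hy : y ∈ Vᗮ) : Q x y = Q y x :=
    apply_comm_of_mem_of_mem_orthogonal hskew hcyc hinv hx hy
  have hzero : ∀ x ∈ V, ∀ y ∈ Vᗮ, Q x y = 0 := fun x hx y hy =>
    V.disjoint_def.1 V.orthogonal_disjoint _ (hcomm hx hy ▸ hinv y x hx)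
      (V.apply_mem_orthogonal_of_skew (hskew x) (hinv x) hy)
  exact ⟨hzero, fun y hy x hx => hcomm hx hy ▸ hzero x hx y hy⟩

theorem weak_curvature_vanishes_across_invariant_splitting
    {E : Type*} [NormedAddCommGroup E] [InnerProductSpace ℝ E] [FiniteDimensional ℝ E]
    (V : Submodule ℝ E)
    (Q : E →ₗ[ℝ] (E →ₗ[ℝ] E))
    (hskew : ∀ x u w : E, ⟪Q x u, w⟫ = - ⟪u, Q x w⟫)
    (hcyc : ∀ x y z : E, ⟪Q x y, z⟫ + ⟪Q y z, x⟫ + ⟪Q z x, y⟫ = 0)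
    (hinv : ∀ x : E, ∀ v ∈ V, Q x v ∈ V) :
    (∀ x ∈ V, ∀ y ∈ Vᗮ, Q x y = 0) ∧
    (∀ y ∈ Vᗮ, ∀ x ∈ V, Q y x = 0) :=
  weak_curvature_vanishes_across_invariant_splitting_general V Q hskew hcyc hinv
end

section
/- Let (𝓔,h) be a finite-dimensional Euclidean vector space and 𝔤 ⊆ 𝔰𝔬(𝓔,h) a Lie subalgebra. Suppose 𝔤 is spanned by the set {R(x,y) : R ∈ 𝒮, x,y ∈ 𝓔} ∪ {Q(x) : Q ∈ 𝒯, x ∈ 𝓔}, where 𝒮 ⊆ K(𝔤) is a set of algebraic curvature tensors with values in 𝔤 and 𝒯 ⊆ B_h(𝔤) is a set of algebraic weak curvature tensors with values in 𝔤. Then 𝔤 has the Borel–Lichnérowicz property: there are an orthogonal decomposition 𝓔 = E_0 ⊕ E_1 ⊕ … ⊕ E_ℓ and a decomposition 𝔤 = 𝔤_1 ⊕ … ⊕ 𝔤_ℓ into commuting ideals such that 𝔤 acts trivially on E_0, each 𝔤_j acts irreducibly on E_j, and 𝔤_j acts trivially on E_i for i ≠ j. -/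
open scoped RealInnerProductSpace

/-!
Let `E₀` be the common kernel of `𝔤`. Since `𝔤` is skew, `E₀ᗮ` is `𝔤`-invariant and splits
orthogonally into `𝔤`-irreducible pieces `E₁, …, E_ℓ`. Along any orthogonal decomposition of `E`
into `𝔤`-invariant pieces, the pair symmetry `⟪R(x,y)z, w⟫ = ⟪R(z,w)x, y⟫` forces `R(x,y) = 0`
for `x`, `y` in different pieces, and then the Bianchi identity shows that `R(x,y)`, for `x`, `y`
in one piece `Eⱼ`, vanishes on all the other pieces; the cyclic identity does the same for `Q(x)`.
So the generators of `𝔤` lie in the ideals `𝔤ⱼ` of elements of `𝔤` vanishing off `Eⱼ`. These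
commute, sum to `𝔤`, and a `𝔤ⱼ`-invariant subspace of `Eⱼ` is `𝔤`-invariant, hence trivial.
-/

theorem Fin.iSup_succ {α : Type*} [CompleteLattice α] {n : ℕ} (f : Fin (n + 1) → α) :
    ⨆ i, f i = f 0 ⊔ ⨆ j : Fin n, f j.succ :=
  le_antisymm (iSup_le <| Fin.cases le_sup_left fun j => le_sup_of_le_right (le_iSup (f ∘ succ) j))
    (sup_le (le_iSup f 0) (iSup_le fun j => le_iSup f j.succ))

theorem Submodule.pairwise_isOrtho_cons {𝕜 E : Type*} [RCLike 𝕜] [NormedAddCommGroup E]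
    [InnerProductSpace 𝕜 E] {n : ℕ} {U : Submodule 𝕜 E} {W : Fin n → Submodule 𝕜 E}
    (hU : ∀ j, U ⟂ W j) (hW : Pairwise fun i j => W i ⟂ W j) :
    Pairwise fun i j => (Fin.cons U W : Fin (n + 1) → Submodule 𝕜 E) i ⟂
      (Fin.cons U W : Fin (n + 1) → Submodule 𝕜 E) j :=
  pairwise_fin_succ_iff.mpr ⟨fun i => by simpa using (hU i).symm, fun j => by simpa using hU j,
    by simpa using hW⟩

theorem Submodule.mem_iInf_ker {R M : Type*} [Semiring R] [AddCommMonoid M] [Module R M]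
    {g : Set (M →ₗ[R] M)} {x : M} : x ∈ ⨅ B ∈ g, LinearMap.ker B ↔ ∀ B ∈ g, B x = 0 := by
  simp

theorem LinearMap.apply_mem_of_mem_iSup {R M N ι : Type*} [Semiring R] [AddCommMonoid M]
    [AddCommMonoid N] [Module R M] [Module R N] {V : ι → Submodule R M} {p : Submodule R N}
    (f : M →ₗ[R] N) (h : ∀ i, ∀ x ∈ V i, f x ∈ p) {x : M} (hx : x ∈ ⨆ i, V i) : f x ∈ p :=
  (iSup_le h : ⨆ i, V i ≤ p.comap f) hx

theorem LinearMap.eq_zero_of_iSup_eq_top {R M N ι : Type*} [Semiring R] [AddCommMonoid M]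
    [AddCommMonoid N] [Module R M] [Module R N] {V : ι → Submodule R M} (hV : ⨆ i, V i = ⊤)
    {f : M →ₗ[R] N} (h : ∀ i, ∀ x ∈ V i, f x = 0) : f = 0 :=
  ext fun _ => (Submodule.mem_bot R).mp <|
    f.apply_mem_of_mem_iSup (p := ⊥) (fun i y hy => (Submodule.mem_bot R).mpr (h i y hy))
      (hV ▸ Submodule.mem_top)

theorem eq_zero_of_inner_eq_zero_of_iSup_eq_top {𝕜 E ι : Type*} [RCLike 𝕜] [NormedAddCommGroup E]
    [InnerProductSpace 𝕜 E] {V : ι → Submodule 𝕜 E} (hV : ⨆ i, V i = ⊤) {v : E}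
    (h : ∀ i, ∀ z ∈ V i, inner 𝕜 v z = 0) : v = 0 := by
  have : (𝕜 ∙ v)ᗮ = ⊤ :=
    eq_top_iff.mpr <| hV ▸ iSup_le fun i z hz =>
      Submodule.mem_orthogonal_singleton_iff_inner_right.mpr (h i z hz)
  simpa using this

section

variable {E : Type*} [NormedAddCommGroup E] [InnerProductSpace ℝ E]

namespace Submodule

def IsInvariant (V : Submodule ℝ E) (g : Set (E →ₗ[ℝ] E)) : Prop :=
  ∀ B ∈ g, ∀ x ∈ V, B x ∈ V

def IsIrreducible (V : Submodule ℝ E) (g : Set (E →ₗ[ℝ] E)) : Prop :=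
  V.IsInvariant g ∧ V ≠ ⊥ ∧ ∀ W ≤ V, W.IsInvariant g → W = ⊥ ∨ W = V

variable {V W : Submodule ℝ E} {g : Set (E →ₗ[ℝ] E)}

theorem isInvariant_iInf_ker (g : Set (E →ₗ[ℝ] E)) :
    (⨅ B ∈ g, LinearMap.ker B).IsInvariant g := fun B hB _ hx =>
  mem_iInf_ker.mp hx B hB ▸ zero_mem _

theorem IsInvariant.inf (hV : V.IsInvariant g) (hW : W.IsInvariant g) : (V ⊓ W).IsInvariant g :=
  fun B hB x hx => ⟨hV B hB x hx.1, hW B hB x hx.2⟩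

theorem IsInvariant.orthogonal (hskew : ∀ B ∈ g, ∀ u w : E, ⟪B u, w⟫ = -⟪u, B w⟫)
    (hV : V.IsInvariant g) : Vᗮ.IsInvariant g := fun B hB x hx u hu => by
  rw [← neg_eq_zero, ← hskew B hB u x]
  exact hx (B u) (hV B hB u hu)

variable [FiniteDimensional ℝ E]

theorem IsInvariant.exists_isIrreducible_le (hV : V.IsInvariant g) (hV₀ : V ≠ ⊥) :
    ∃ W ≤ V, W.IsIrreducible g := by
  obtain ⟨W, ⟨hWV, hW, hW₀⟩, hmin⟩ := wellFounded_lt.has_min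
    {W : Submodule ℝ E | W ≤ V ∧ W.IsInvariant g ∧ W ≠ ⊥} ⟨V, le_rfl, hV, hV₀⟩
  refine ⟨W, hWV, hW, hW₀, fun U hUW hU => or_iff_not_imp_left.mpr fun hU₀ => ?_⟩
  exact (eq_or_lt_of_le hUW).resolve_right (hmin U ⟨hUW.trans hWV, hU, hU₀⟩)

theorem IsInvariant.exists_orthogonal_irreducible_decomposition
    (hskew : ∀ B ∈ g, ∀ u w : E, ⟪B u, w⟫ = -⟪u, B w⟫) (hV : V.IsInvariant g) :
    ∃ (n : ℕ) (W : Fin n → Submodule ℝ E), (Pairwise fun i j => W i ⟂ W j) ∧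
      (∀ j, (W j).IsIrreducible g) ∧ ⨆ j, W j = V := by
  induction h : Module.finrank ℝ V using Nat.strong_induction_on generalizing V with
  | _ d ih =>
  by_cases hV₀ : V = ⊥
  · exact ⟨0, Fin.elim0, fun i => i.elim0, fun i => i.elim0, by simp [hV₀]⟩
  obtain ⟨W₁, hW₁V, hW₁⟩ := hV.exists_isIrreducible_le hV₀
  have hlt : W₁ᗮ ⊓ V < V := by
    refine inf_lt_right.mpr fun hle => hW₁.2.1 ?_
    exact (orthogonal_disjoint W₁).eq_bot_of_le (hW₁V.trans hle)
  obtain ⟨n, W, hWo, hW, hWsup⟩ := ih _ (h ▸ finrank_lt_finrank_of_lt hlt)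
    ((hW₁.1.orthogonal hskew).inf hV) rfl
  refine ⟨n + 1, Fin.cons W₁ W, ?_, Fin.cases hW₁ hW, ?_⟩
  · refine pairwise_isOrtho_cons (fun j => ?_) hWo
    exact (isOrtho_orthogonal_right W₁).mono_right ((le_iSup W j).trans (hWsup ▸ inf_le_left))
  · rw [Fin.iSup_succ]
    simp only [Fin.cons_zero, Fin.cons_succ]
    rw [hWsup, sup_orthogonal_inf_of_hasOrthogonalProjection hW₁V]

end Submodule

theorem pair_symm_of_bianchi {α : Type*} (b : α → α → α → α → ℝ)
    (h₁ : ∀ x y z w, b x y z w = -b y x z w) (h₂ : ∀ x y z w, b x y z w = -b x y w z)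
    (hb : ∀ x y z w, b x y z w + b y z x w + b z x y w = 0) (x y z w : α) :
    b x y z w = b z w x y := by
  -- sum the Bianchi identity over the four cyclic shifts of `(x, y, z, w)`
  linarith [hb x y z w, hb y z w x, hb z w x y, hb w x y z, h₂ y z x w, h₂ w x z y,
    h₁ z x y w, h₂ x z y w, h₂ z w y x, h₁ w y z x, h₂ y w z x, h₂ x y w z]

structure IsCurvatureTensor (g : Set (E →ₗ[ℝ] E)) (R : E →ₗ[ℝ] E →ₗ[ℝ] E →ₗ[ℝ] E) : Prop where
  antisymm : ∀ x y, R x y = -R y x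
  mem : ∀ x y, R x y ∈ g
  bianchi : ∀ x y z, R x y z + R y z x + R z x y = 0

structure IsWeakCurvatureTensor (g : Set (E →ₗ[ℝ] E)) (q : E →ₗ[ℝ] E →ₗ[ℝ] E) : Prop where
  mem : ∀ x, q x ∈ g
  cyclic : ∀ x y z, ⟪q x y, z⟫ + ⟪q y z, x⟫ + ⟪q z x, y⟫ = 0

theorem IsCurvatureTensor.inner_apply_comm {g : Set (E →ₗ[ℝ] E)}
    {R : E →ₗ[ℝ] E →ₗ[ℝ] E →ₗ[ℝ] E} (hskew : ∀ B ∈ g, ∀ u w : E, ⟪B u, w⟫ = -⟪u, B w⟫)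
    (hR : IsCurvatureTensor g R) (x y z w : E) : ⟪R x y z, w⟫ = ⟪R z w x, y⟫ :=
  pair_symm_of_bianchi (fun x y z w => ⟪R x y z, w⟫)
    (fun x y z w => by rw [hR.antisymm x y, LinearMap.neg_apply, inner_neg_left])
    (fun x y z w => by rw [hskew _ (hR.mem x y), real_inner_comm])
    (fun x y z w => by rw [← inner_add_left, ← inner_add_left, hR.bianchi, inner_zero_left])
    x y z w

/-- The paper's ideal `𝔤ᵢ` attached to the piece `V i`. -/
def supportedPart {ι : Type*} (g : Submodule ℝ (E →ₗ[ℝ] E)) (V : ι → Submodule ℝ E) (i : ι) :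
    Submodule ℝ (E →ₗ[ℝ] E) where
  carrier := {A | A ∈ g ∧ ∀ k, k ≠ i → ∀ x ∈ V k, A x = 0}
  add_mem' ha hb :=
    ⟨g.add_mem ha.1 hb.1, fun k hk x hx => by simp [ha.2 k hk x hx, hb.2 k hk x hx]⟩
  zero_mem' := ⟨g.zero_mem, fun _ _ _ _ => rfl⟩
  smul_mem' c _ ha := ⟨g.smul_mem c ha.1, fun k hk x hx => by simp [ha.2 k hk x hx]⟩

section Splitting

variable {ι : Type*} {g : Submodule ℝ (E →ₗ[ℝ] E)} {V : ι → Submodule ℝ E}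

theorem supportedPart_le (i : ι) : supportedPart g V i ≤ g := fun _ hA => hA.1

theorem supportedPart_eq_bot (hV : ⨆ i, V i = ⊤) {i : ι} (htriv : ∀ B ∈ g, ∀ x ∈ V i, B x = 0) :
    supportedPart g V i = ⊥ := by
  refine eq_bot_iff.mpr fun A hA => (Submodule.mem_bot ℝ).mpr ?_
  refine LinearMap.eq_zero_of_iSup_eq_top hV fun k x hx => ?_
  obtain rfl | hk := eq_or_ne k i
  exacts [htriv A hA.1 x hx, hA.2 k hk x hx]

theorem commutator_mem_supportedPart (hinv : ∀ i, (V i).IsInvariant g)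
    (hbracket : ∀ B ∈ g, ∀ C ∈ g, B * C - C * B ∈ g) {i : ι} {B C : E →ₗ[ℝ] E} (hB : B ∈ g)
    (hC : C ∈ supportedPart g V i) :
    B * C - C * B ∈ supportedPart g V i :=
  ⟨hbracket B hB C hC.1, fun k hk x hx => by
    simp [hC.2 k hk x hx, hC.2 k hk _ (hinv k B hB x hx)]⟩

theorem commute_of_mem_supportedPart (hinv : ∀ i, (V i).IsInvariant g) (hV : ⨆ i, V i = ⊤)
    {i j : ι} (hij : i ≠ j)
    {B C : E →ₗ[ℝ] E} (hB : B ∈ supportedPart g V i) (hC : C ∈ supportedPart g V j) :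
    B * C = C * B := by
  refine sub_eq_zero.mp (LinearMap.eq_zero_of_iSup_eq_top hV fun k x hx => ?_)
  obtain rfl | hk := eq_or_ne k j
  · simp [hB.2 k hij.symm x hx, hB.2 k hij.symm _ (hinv k C hC.1 x hx)]
  · simp [hC.2 k hk x hx, hC.2 k hk _ (hinv k B hB.1 x hx)]

theorem IsCurvatureTensor.apply_eq_zero_of_ne {R : E →ₗ[ℝ] E →ₗ[ℝ] E →ₗ[ℝ] E}
    (hskew : ∀ B ∈ g, ∀ u w : E, ⟪B u, w⟫ = -⟪u, B w⟫) (hR : IsCurvatureTensor g R)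
    (hV : Pairwise fun i j => V i ⟂ V j) (hinv : ∀ i, (V i).IsInvariant g) {a b : ι}
    (hab : a ≠ b) {x y : E} (hx : x ∈ V a) (hy : y ∈ V b) : R x y = 0 := by
  ext z
  rw [LinearMap.zero_apply, ← inner_self_eq_zero (𝕜 := ℝ), hR.inner_apply_comm hskew]
  exact (hV hab).inner_eq (hinv a _ (hR.mem z _) x hx) hy

theorem IsCurvatureTensor.mem_supportedPart {R : E →ₗ[ℝ] E →ₗ[ℝ] E →ₗ[ℝ] E}
    (hskew : ∀ B ∈ g, ∀ u w : E, ⟪B u, w⟫ = -⟪u, B w⟫) (hR : IsCurvatureTensor g R)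
    (hV : Pairwise fun i j => V i ⟂ V j) (hinv : ∀ i, (V i).IsInvariant g) {a : ι} {x y : E}
    (hx : x ∈ V a) (hy : y ∈ V a) : R x y ∈ supportedPart g V a := by
  refine ⟨hR.mem x y, fun k hk z hz => ?_⟩
  have := hR.bianchi x y z
  rwa [hR.apply_eq_zero_of_ne hskew hV hinv hk.symm hy hz,
    hR.apply_eq_zero_of_ne hskew hV hinv hk hz hx, LinearMap.zero_apply, LinearMap.zero_apply,
    add_zero, add_zero] at this

theorem IsWeakCurvatureTensor.apply_apply_eq_zero_of_ne {q : E →ₗ[ℝ] E →ₗ[ℝ] E}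
    (hq : IsWeakCurvatureTensor g q) (hV : Pairwise fun i j => V i ⟂ V j)
    (hinv : ∀ i, (V i).IsInvariant g) (htop : ⨆ i, V i = ⊤) {a b : ι} (hab : a ≠ b) {x y : E}
    (hx : x ∈ V a) (hy : y ∈ V b) : q x y = 0 := by
  refine eq_zero_of_inner_eq_zero_of_iSup_eq_top htop fun c z hz => ?_
  obtain rfl | hca := eq_or_ne c a
  · exact (hV hab.symm).inner_eq (hinv b _ (hq.mem x) y hy) hz
  · have h₁ : ⟪q y z, x⟫ = 0 := (hV hca).inner_eq (hinv c _ (hq.mem y) z hz) hx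
    have h₂ : ⟪q z x, y⟫ = 0 := (hV hab).inner_eq (hinv a _ (hq.mem z) x hx) hy
    linarith [hq.cyclic x y z]

theorem IsWeakCurvatureTensor.mem_supportedPart {q : E →ₗ[ℝ] E →ₗ[ℝ] E}
    (hq : IsWeakCurvatureTensor g q) (hV : Pairwise fun i j => V i ⟂ V j)
    (hinv : ∀ i, (V i).IsInvariant g) (htop : ⨆ i, V i = ⊤) {a : ι} {x : E} (hx : x ∈ V a) :
    q x ∈ supportedPart g V a :=
  ⟨hq.mem x, fun _ hk _ hz => hq.apply_apply_eq_zero_of_ne hV hinv htop hk.symm hx hz⟩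

theorem iSup_supportedPart_eq (hskew : ∀ B ∈ g, ∀ u w : E, ⟪B u, w⟫ = -⟪u, B w⟫)
    (hV : Pairwise fun i j => V i ⟂ V j) (hinv : ∀ i, (V i).IsInvariant g) (htop : ⨆ i, V i = ⊤)
    {S : Set (E →ₗ[ℝ] E →ₗ[ℝ] E →ₗ[ℝ] E)} (hS : ∀ R ∈ S, IsCurvatureTensor g R)
    {Q : Set (E →ₗ[ℝ] E →ₗ[ℝ] E)} (hQ : ∀ q ∈ Q, IsWeakCurvatureTensor g q)
    (hspan : g = Submodule.span ℝ
      ({F : E →ₗ[ℝ] E | ∃ R ∈ S, ∃ x y : E, F = R x y} ∪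
       {F : E →ₗ[ℝ] E | ∃ q ∈ Q, ∃ x : E, F = q x})) :
    ⨆ i, supportedPart g V i = g := by
  set M := ⨆ i, supportedPart g V i
  have hmem (f : E →ₗ[ℝ] E →ₗ[ℝ] E) (hf : ∀ a, ∀ x ∈ V a, f x ∈ M) (x : E) : f x ∈ M :=
    f.apply_mem_of_mem_iSup hf (htop ▸ Submodule.mem_top)
  refine le_antisymm (iSup_le supportedPart_le) ?_
  rw [hspan, Submodule.span_le]
  rintro _ (⟨R, hR, x, y, rfl⟩ | ⟨q, hq, x, rfl⟩)
  · refine hmem (R.flip y) (fun a x hx => hmem (R x) (fun b y hy => ?_) y) x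
    obtain rfl | hab := eq_or_ne a b
    · exact Submodule.mem_iSup_of_mem a ((hS R hR).mem_supportedPart hskew hV hinv hx hy)
    · simp [(hS R hR).apply_eq_zero_of_ne hskew hV hinv hab hx hy]
  · exact hmem q (fun a x hx =>
      Submodule.mem_iSup_of_mem a ((hQ q hq).mem_supportedPart hV hinv htop hx)) x

theorem Submodule.IsIrreducible.supportedPart (hgen : ⨆ i, supportedPart g V i = g) {j : ι}
    (hj : (V j).IsIrreducible g) : (V j).IsIrreducible (supportedPart g V j) := by
  refine ⟨fun B hB => hj.1 B (supportedPart_le j hB), hj.2.1, fun W hWV hW => hj.2.2 W hWV ?_⟩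
  intro B hB x hx
  refine (LinearMap.applyₗ x).apply_mem_of_mem_iSup (fun k A hA => ?_) (hgen ▸ hB)
  obtain rfl | hkj := eq_or_ne k j
  exacts [hW A hA x hx, hA.2 j hkj.symm x (hWV hx) ▸ W.zero_mem]

end Splitting

end

theorem borel_lichnerowicz_of_curvature_generated
    {E : Type*} [NormedAddCommGroup E] [InnerProductSpace ℝ E] [FiniteDimensional ℝ E]
    (g : Submodule ℝ (E →ₗ[ℝ] E))
    (hbracket : ∀ B ∈ g, ∀ C ∈ g, B * C - C * B ∈ g)
    (hskew : ∀ B ∈ g, ∀ u w : E, ⟪B u, w⟫ = - ⟪u, B w⟫)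
    (S : Set (E →ₗ[ℝ] E →ₗ[ℝ] (E →ₗ[ℝ] E)))
    (hS : ∀ R ∈ S, (∀ x y : E, R x y = - R y x) ∧ (∀ x y : E, R x y ∈ g) ∧
      (∀ x y z : E, R x y z + R y z x + R z x y = 0))
    (Q : Set (E →ₗ[ℝ] (E →ₗ[ℝ] E)))
    (hQ : ∀ q ∈ Q, (∀ x : E, q x ∈ g) ∧
      (∀ x y z : E, ⟪q x y, z⟫ + ⟪q y z, x⟫ + ⟪q z x, y⟫ = 0))
    (hspan : g = Submodule.span ℝ
      ({F : E →ₗ[ℝ] E | ∃ R ∈ S, ∃ x y : E, F = R x y} ∪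
       {F : E →ₗ[ℝ] E | ∃ q ∈ Q, ∃ x : E, F = q x})) :
    ∃ (ℓ : ℕ) (Esub : Fin (ℓ + 1) → Submodule ℝ E)
      (gsub : Fin ℓ → Submodule ℝ (E →ₗ[ℝ] E)),
      -- orthogonal decomposition E = E₀ ⊕ E₁ ⊕ … ⊕ E_ℓ
      (∀ i j, i ≠ j → ∀ x ∈ Esub i, ∀ y ∈ Esub j, ⟪x, y⟫ = 0) ∧
      (⨆ i, Esub i) = ⊤ ∧
      -- 𝔤 acts trivially on E₀
      (∀ B ∈ g, ∀ x ∈ Esub 0, B x = 0) ∧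
      -- decomposition 𝔤 = 𝔤₁ ⊕ … ⊕ 𝔤_ℓ into commuting ideals
      (∀ j, gsub j ≤ g) ∧
      (⨆ j, gsub j) = g ∧
      (∀ j, ∀ B ∈ g, ∀ C ∈ gsub j, B * C - C * B ∈ gsub j) ∧
      (∀ i j, i ≠ j → ∀ B ∈ gsub i, ∀ C ∈ gsub j, B * C = C * B) ∧
      -- 𝔤ⱼ acts irreducibly on Eⱼ
      (∀ j : Fin ℓ,
        (∀ B ∈ gsub j, ∀ x ∈ Esub j.succ, B x ∈ Esub j.succ) ∧
        Esub j.succ ≠ ⊥ ∧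
        (∀ W : Submodule ℝ E, W ≤ Esub j.succ →
          (∀ B ∈ gsub j, ∀ x ∈ W, B x ∈ W) → W = ⊥ ∨ W = Esub j.succ)) ∧
      -- 𝔤ⱼ acts trivially on Eᵢ for i ≠ j
      (∀ (j : Fin ℓ) (i : Fin (ℓ + 1)), i ≠ j.succ →
        ∀ B ∈ gsub j, ∀ x ∈ Esub i, B x = 0) := by
  set E₀ := ⨅ B ∈ (g : Set (E →ₗ[ℝ] E)), LinearMap.ker B
  have htriv : ∀ B ∈ g, ∀ x ∈ E₀, B x = 0 := fun B hB x hx => Submodule.mem_iInf_ker.mp hx B hB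
  obtain ⟨n, W, hWo, hW, hWsup⟩ := ((Submodule.isInvariant_iInf_ker _).orthogonal
    hskew).exists_orthogonal_irreducible_decomposition hskew
  set V : Fin (n + 1) → Submodule ℝ E := Fin.cons E₀ W
  have hV : Pairwise fun i j => V i ⟂ V j := Submodule.pairwise_isOrtho_cons (fun j =>
    (Submodule.isOrtho_orthogonal_right E₀).mono_right (hWsup ▸ le_iSup W j)) hWo
  have htop : ⨆ i, V i = ⊤ := by
    rw [Fin.iSup_succ]
    simp only [V, Fin.cons_zero, Fin.cons_succ]
    rw [hWsup, Submodule.sup_orthogonal_of_hasOrthogonalProjection]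
  have hinv : ∀ i, (V i).IsInvariant g :=
    Fin.cases (Submodule.isInvariant_iInf_ker _) fun j => (hW j).1
  have hgen := iSup_supportedPart_eq hskew hV hinv htop
    (fun R hR => ⟨(hS R hR).1, (hS R hR).2.1, (hS R hR).2.2⟩)
    (fun q hq => ⟨(hQ q hq).1, (hQ q hq).2⟩) hspan
  refine ⟨n, V, fun j => supportedPart g V j.succ,
    fun i j hij x hx y hy => (hV hij).inner_eq hx hy, htop, htriv, fun j => supportedPart_le _, ?_,
    fun j B hB C hC => commutator_mem_supportedPart hinv hbracket hB hC,
    fun i j hij B hB C hC =>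
      commute_of_mem_supportedPart hinv htop (Fin.succ_injective _ |>.ne hij) hB hC,
    fun j => (hW j).supportedPart (j := j.succ) hgen, fun j i hi B hB => hB.2 i hi⟩
  conv_rhs => rw [← hgen, Fin.iSup_succ, supportedPart_eq_bot htop htriv, bot_sup_eq]
end
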